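/- The class of graphs that are not 2-cographs but all of whose proper induced subgraphs are 2-cographs is infinite. -/

import Mathlib

/-- A graph is 2-connected if it has at least 3 vertices, is connected,
and remains connected after deleting any single vertex. -/
def TwoConnected {V : Type} [Fintype V] (G : SimpleGraph V) : Prop :=
  3 ≤ Fintype.card V ∧ G.Connected ∧
    ∀ v : V, (G.induce ({v}ᶜ : Set V)).Connected

/-- A graph is a 2-cograph if it has no induced subgraph `H` such that
both `H` and its complement are 2-connected. -/
def IsTwoCograph {V : Type} [Fintype V] (G : SimpleGraph V) : Prop :=
  ∀ S : Finset V, ¬ (TwoConnected (G.induce (S : Set V)) ∧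
      TwoConnected ((G.induce (S : Set V))ᶜ))

/-!
The cycles `C_n` with `n ≥ 8` form the infinite family. `C_n` is 2-connected, and so is its
complement: after deleting a vertex, any two remaining vertices exclude at most seven vertices
(themselves, their cycle neighbours and the deleted one) and so have a common neighbour in the
complement. Hence `C_n` is not a 2-cograph. A proper induced subgraph of `C_n` misses a vertex of
the cycle, so it is a disjoint union of paths: each of its induced subgraphs has a vertex of degree
at most one, and deleting that vertex's neighbour isolates it, so none of them is 2-connected.
-/

open SimpleGraph

theorem SimpleGraph.compl_induce {V : Type*} (G : SimpleGraph V) (s : Set V) :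
    (G.induce s)ᶜ = Gᶜ.induce s := by
  ext a b
  simp [Subtype.ext_iff]

theorem TwoConnected.of_iso {V W : Type} [Fintype V] [Fintype W] {G : SimpleGraph V}
    {H : SimpleGraph W} (e : G ≃g H) (hG : TwoConnected G) : TwoConnected H := by
  obtain ⟨hcard, hconn, hdel⟩ := hG
  refine ⟨Fintype.card_congr e.toEquiv ▸ hcard, e.connected_iff.mp hconn, fun w => ?_⟩
  have hbij : Set.BijOn e ({e.symm w}ᶜ) ({w}ᶜ) :=
    e.toEquiv.bijOn fun _ => not_congr e.toEquiv.eq_symm_apply.symm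
  exact (e.induce hbij).connected_iff.mp (hdel (e.symm w))

theorem not_isTwoCograph_of_twoConnected {V : Type} [Fintype V] {G : SimpleGraph V}
    (hG : TwoConnected G) (hGc : TwoConnected Gᶜ) : ¬ IsTwoCograph G := by
  intro h
  apply h Finset.univ
  have e (H : SimpleGraph V) : H ≃g H.induce (Finset.univ : Finset V) :=
    (Iso.refl.induce (by rw [Finset.coe_univ]; exact Set.bijOn_id _)).comp
      (induceUnivIso H).symm
  rw [compl_induce]
  exact ⟨hG.of_iso (e G), hGc.of_iso (e Gᶜ)⟩

theorem not_twoConnected_of_neighborSet_subsingleton {V : Type} [Fintype V]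
    {G : SimpleGraph V} {a : V} (ha : (G.neighborSet a).Subsingleton) : ¬ TwoConnected G := by
  classical
  rintro ⟨hcard, -, hdel⟩
  obtain ⟨d, hda, had⟩ : ∃ d, d ≠ a ∧ G.neighborSet a ⊆ {d} := by
    obtain hempty | ⟨d, hd⟩ := ha.eq_empty_or_singleton
    · obtain ⟨d, hd⟩ := Fintype.exists_ne_of_one_lt_card (by omega) a
      exact ⟨d, hd, hempty ▸ Set.empty_subset _⟩
    · have hadj : G.Adj a d := by rw [← mem_neighborSet, hd]; rfl
      exact ⟨d, hadj.ne.symm, hd.subset⟩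
  obtain ⟨b, -, hb⟩ := Finset.exists_mem_notMem_of_card_lt_card (s := {a, d}) (t := Finset.univ)
    (Finset.card_le_two.trans_lt (by rw [Finset.card_univ]; omega))
  simp only [Finset.mem_insert, Finset.mem_singleton, not_or] at hb
  obtain ⟨c, hc⟩ :=
    ((hdel d).preconnected ⟨a, hda.symm⟩ ⟨b, hb.2⟩).nonempty_neighborSet_left
      (by simpa [Subtype.ext_iff, eq_comm] using hb.1)
  exact c.2 (had hc)

theorem SimpleGraph.connected_of_exists_common_adj {V : Type*} [Nonempty V] {G : SimpleGraph V}
    (h : ∀ x y, x ≠ y → ∃ z, G.Adj x z ∧ G.Adj z y) : G.Connected := by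
  refine ⟨fun x y => ?_⟩
  obtain rfl | hxy := eq_or_ne x y
  · rfl
  obtain ⟨z, hxz, hzy⟩ := h x y hxy
  exact hxz.reachable.trans hzy.reachable

theorem exists_neighborSet_subsingleton_of_embedding_cycleGraph {W : Type*} [Finite W]
    [Nonempty W] {n : ℕ} {H : SimpleGraph W} (f : H ↪g cycleGraph n)
    (hf : ¬ Function.Surjective f) : ∃ a, (H.neighborSet a).Subsingleton := by
  obtain ⟨v, hv⟩ := not_forall.mp hf
  obtain ⟨w⟩ := ‹Nonempty W›
  have hn : 1 < Fintype.card (Fin n) :=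
    Fintype.one_lt_card_iff.mpr ⟨f w, v, fun h => hv ⟨w, h⟩⟩
  obtain ⟨m, rfl⟩ : ∃ m, n = m + 2 := ⟨n - 2, by rw [Fintype.card_fin] at hn; omega⟩
  -- the image vertex last before `v` along the cycle: its successor is not in the image
  obtain ⟨a, ha⟩ := Finite.exists_max fun x => (f x - v).val
  have hnbr : ∀ b, H.Adj a b → f b = f a - 1 := by
    intro b hab
    have hb : f b ≠ v := fun h => hv ⟨b, h⟩
    rcases f.map_adj_iff.mpr hab with h | h
    · rw [← h, sub_sub_cancel]
    · have hbv : f b - v = (f a - v) + 1 := by rw [← h]; abel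
      have hle := ha b
      rw [hbv, Fin.val_add_one] at hle
      split_ifs at hle with hlast
      · exact (hb (sub_eq_zero.mp (by rw [hbv, hlast, Fin.last_add_one]))).elim
      · omega
  refine ⟨a, fun b hb c hc => ?_⟩
  exact f.injective ((hnbr b hb).trans (hnbr c hc).symm)

open Fin.NatCast in
theorem twoConnected_cycleGraph {n : ℕ} (hn : 3 ≤ n) : TwoConnected (cycleGraph n) := by
  obtain ⟨m, rfl⟩ : ∃ m, n = m + 3 := ⟨n - 3, by omega⟩
  refine ⟨by simp, cycleGraph_connected, fun v => ?_⟩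
  -- the cycle minus `v` is the image of the path `v + 1, v + 2, …, v - 1`
  have hmem (i : Fin (m + 2)) :
      v + 1 + (i.val : Fin (m + 3)) ∈ ({v}ᶜ : Set (Fin (m + 3))) := by
    rw [Set.mem_compl_singleton_iff, add_assoc, Ne, add_eq_left, add_comm (1 : Fin (m + 3)),
      ← Nat.cast_succ, Fin.natCast_eq_zero]
    exact Nat.not_dvd_of_pos_of_lt i.val.succ_pos (by omega)
  let f : pathGraph (m + 2) →g (cycleGraph (m + 3)).induce {v}ᶜ :=
    { toFun i := ⟨v + 1 + (i.val : Fin (m + 3)), hmem i⟩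
      map_rel' := by
        intro i j hij
        rw [pathGraph_adj] at hij
        simp only [comap_adj, Function.Embedding.subtype_apply, cycleGraph_adj]
        rcases hij with h | h
        · right; rw [← h]; push_cast; abel
        · left; rw [← h]; push_cast; abel }
  refine (pathGraph_connected _).map f fun u => ?_
  have hu : (u : Fin (m + 3)) ≠ v := u.2
  refine ⟨⟨(u - v - 1 : Fin (m + 3)).val, ?_⟩, Subtype.ext ?_⟩
  · by_contra! hlt
    have hlast : (u : Fin (m + 3)) - v - 1 = Fin.last (m + 2) :=
      Fin.ext (by have := (u - v - 1 : Fin (m + 3)).isLt; simp only [Fin.val_last]; omega)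
    exact hu (sub_eq_zero.mp (by rw [← sub_add_cancel (u - v : Fin (m + 3)) 1, hlast,
      Fin.last_add_one]))
  · simp [f]

theorem exists_common_adj_compl_cycleGraph {n : ℕ} (hn : 8 ≤ n) (x y v : Fin n) :
    ∃ z, z ≠ v ∧ (cycleGraph n)ᶜ.Adj x z ∧ (cycleGraph n)ᶜ.Adj z y := by
  obtain ⟨m, rfl⟩ : ∃ m, n = m + 2 := ⟨n - 2, by omega⟩
  obtain ⟨z, -, hz⟩ := Finset.exists_mem_notMem_of_card_lt_card
    (s := [x - 1, x, x + 1, y - 1, y, y + 1, v].toFinset) (t := Finset.univ)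
    ((List.toFinset_card_le _).trans_lt <| by
      simp only [Finset.card_univ, Fintype.card_fin, List.length_cons, List.length_nil]; omega)
  simp only [List.mem_toFinset, List.mem_cons, List.not_mem_nil, or_false, not_or] at hz
  refine ⟨z, hz.2.2.2.2.2.2, ?_, ?_⟩
  · rw [compl_adj, ← mem_neighborSet, cycleGraph_neighborSet]
    grind
  · rw [compl_adj, adj_comm, ← mem_neighborSet, cycleGraph_neighborSet]
    grind

theorem twoConnected_compl_cycleGraph {n : ℕ} (hn : 8 ≤ n) :
    TwoConnected (cycleGraph n)ᶜ := by
  have : NeZero n := ⟨by omega⟩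
  refine ⟨by rw [Fintype.card_fin]; omega, connected_of_exists_common_adj fun x y _ => ?_,
    fun v => ?_⟩
  · obtain ⟨z, -, hz⟩ := exists_common_adj_compl_cycleGraph hn x y x
    exact ⟨z, hz⟩
  · obtain ⟨w, hwv, -⟩ := exists_common_adj_compl_cycleGraph hn v v v
    have : Nonempty ({v}ᶜ : Set (Fin n)) := ⟨⟨w, hwv⟩⟩
    refine connected_of_exists_common_adj fun x y _ => ?_
    obtain ⟨z, hzv, hz⟩ := exists_common_adj_compl_cycleGraph hn x y v
    exact ⟨⟨z, hzv⟩, hz⟩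

theorem isTwoCograph_of_embedding_cycleGraph {V : Type} [Fintype V] {G : SimpleGraph V} {n : ℕ}
    (f : G ↪g cycleGraph n) (hf : ¬ Function.Surjective f) : IsTwoCograph G := by
  rintro S ⟨hS, -⟩
  have : Nonempty (S : Set V) := Fintype.card_pos_iff.mp (by have := hS.1; omega)
  obtain ⟨a, ha⟩ := exists_neighborSet_subsingleton_of_embedding_cycleGraph
    (f.comp (Embedding.induce (S : Set V)))
    fun hg => hf (by rw [Embedding.coe_comp] at hg; exact hg.of_comp)
  exact not_twoConnected_of_neighborSet_subsingleton ha hS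

theorem induced_subgraph_minimal_non_twoCographs_infinite :
    ∀ N : ℕ, ∃ (V : Type) (_ : Fintype V) (G : SimpleGraph V),
      N ≤ Fintype.card V ∧ ¬ IsTwoCograph G ∧
        ∀ S : Finset V, S ≠ Finset.univ →
          IsTwoCograph (G.induce (S : Set V)) := by
  intro N
  refine ⟨Fin (N + 8), inferInstance, cycleGraph (N + 8), by simp, ?_, fun S hS => ?_⟩
  · exact not_isTwoCograph_of_twoConnected (twoConnected_cycleGraph (by omega))
      (twoConnected_compl_cycleGraph (by omega))
  · obtain ⟨v, -, hv⟩ := Finset.exists_of_ssubset (Finset.ssubset_univ_iff.mpr hS)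
    refine isTwoCograph_of_embedding_cycleGraph (Embedding.induce _) fun h => hv ?_
    obtain ⟨w, rfl⟩ := h v
    exact w.2
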